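/- arXiv:1309.3467 — 5 statements merged into one kernel-verified Lean document; each statement's English description precedes it below -/
import Mathlib

section
/- Let M ≥ 2, let S : Fin M → ℂ be an injective signal set, and let s be a nonzero complex number. Then the minimum, over all Latin squares f of order M (with symbols in any Fin t) that remove the fade state s, of the number of distinct symbols actually used by f (the cardinality of the range of f), equals the chromatic number of the singularity removal graph G_s. -/
noncomputable section

/-- The equivalence relation on cells `(a,b)` identifying cells with the same
effective constellation point `S a + s * S b`. Its classes are the
singularity removal constraints. -/
def fadeSetoid (M : ℕ) (S : Fin M → ℂ) (s : ℂ) : Setoid (Fin M × Fin M) where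
  r p q := S p.1 + s * S p.2 = S q.1 + s * S q.2
  iseqv := ⟨fun _ => rfl, fun h => h.symm, fun h₁ h₂ => h₁.trans h₂⟩

/-- The singularity removal graph: vertices are the singularity removal
constraints (equivalence classes); two distinct classes are adjacent iff they
contain cells sharing a row or a column. -/
def srg (M : ℕ) (S : Fin M → ℂ) (s : ℂ) :
    SimpleGraph (Quotient (fadeSetoid M S s)) where
  Adj u v := u ≠ v ∧ ∃ p q : Fin M × Fin M,
      Quotient.mk (fadeSetoid M S s) p = u ∧ Quotient.mk (fadeSetoid M S s) q = v ∧
      (p.1 = q.1 ∨ p.2 = q.2)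
  symm := by
    constructor
    rintro u v ⟨hne, p, q, hp, hq, h⟩
    exact ⟨hne.symm, q, p, hq, hp, h.imp Eq.symm Eq.symm⟩
  loopless := by
    constructor
    rintro u ⟨hne, -⟩
    exact hne rfl

/-- A Latin square of order `M` with symbols in `Fin t`. -/
def IsLatinSquare {M t : ℕ} (f : Fin M × Fin M → Fin t) : Prop :=
  (∀ a : Fin M, Function.Injective fun b => f (a, b)) ∧
  (∀ b : Fin M, Function.Injective fun a => f (a, b))

/-- `f` removes the fade state `s`: it is constant on every singularity
removal constraint. -/
def RemovesFadeState (M : ℕ) (S : Fin M → ℂ) (s : ℂ) {t : ℕ}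
    (f : Fin M × Fin M → Fin t) : Prop :=
  ∀ p q : Fin M × Fin M, S p.1 + s * S p.2 = S q.1 + s * S q.2 → f p = f q

/-- The set of singularity removal constraints containing at least two cells. -/
def vitalSet (M : ℕ) (S : Fin M → ℂ) (s : ℂ) : Set (Quotient (fadeSetoid M S s)) :=
  {c | ∃ p q : Fin M × Fin M, p ≠ q ∧
    Quotient.mk (fadeSetoid M S s) p = c ∧ Quotient.mk (fadeSetoid M S s) q = c}

/-- The vital subgraph: the induced subgraph of the singularity removal graph
on the classes of size at least two. -/
def vital (M : ℕ) (S : Fin M → ℂ) (s : ℂ) : SimpleGraph (vitalSet M S s) :=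
  (srg M S s).induce (vitalSet M S s)

/-- The `M`-PSK signal set `S m = exp (i (2m+1) π / M)`. -/
def PSK (M : ℕ) : Fin M → ℂ :=
  fun m => Complex.exp (Complex.I * (2 * (m : ℕ) + 1) * (Real.pi : ℂ) / (M : ℂ))

/-- The square `n²`-QAM signal set: `S (k + l n) = (−n+1+2l) + (−n+1+2k) i`. -/
def QAM (n : ℕ) : Fin (n ^ 2) → ℂ := fun j =>
  (((2 * ((j : ℕ) / n) + 1 : ℤ) - (n : ℤ) : ℤ) : ℂ) +
    (((2 * ((j : ℕ) % n) + 1 : ℤ) - (n : ℤ) : ℤ) : ℂ) * Complex.I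

/-! A Latin square removing `s` is constant on singularity removal constraints, so it factors
through a map on constraints; the Latin property says exactly that two distinct constraints
sharing a row or column get distinct symbols, i.e. that this map is a proper coloring of the
singularity removal graph with the symbols actually used. Conversely, since `S` is injective and
`s ≠ 0`, distinct cells in a common row or column lie in distinct constraints, so every coloring
of the graph, read cell by cell, is a Latin square removing `s`. -/

section

variable {M : ℕ} {S : Fin M → ℂ} {s : ℂ}

theorem isLatinSquare_iff {t : ℕ} {f : Fin M × Fin M → Fin t} :
    IsLatinSquare f ↔ ∀ p q : Fin M × Fin M, (p.1 = q.1 ∨ p.2 = q.2) → f p = f q → p = q := by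
  refine ⟨?_, fun h => ⟨fun a b b' hb => ?_, fun b a a' ha => ?_⟩⟩
  · rintro ⟨hrow, hcol⟩ ⟨a, b⟩ ⟨a', b'⟩ (rfl | rfl : a = a' ∨ b = b') hf
    · rw [hrow a hf]
    · rw [hcol b hf]
  · exact congrArg Prod.snd (h (a, b) (a, b') (Or.inl rfl) hb)
  · exact congrArg Prod.fst (h (a, b) (a', b) (Or.inr rfl) ha)

theorem eq_of_fadeSetoid_mk_eq (hS : Function.Injective S) (hs : s ≠ 0)
    {p q : Fin M × Fin M} (hline : p.1 = q.1 ∨ p.2 = q.2)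
    (hpq : Quotient.mk (fadeSetoid M S s) p = Quotient.mk (fadeSetoid M S s) q) : p = q := by
  obtain ⟨a, b⟩ := p
  obtain ⟨a', b'⟩ := q
  have hsum : S a + s * S b = S a' + s * S b' := Quotient.exact hpq
  rcases hline with rfl | rfl
  · rw [hS (mul_left_cancel₀ hs (add_left_cancel hsum))]
  · rw [hS (add_right_cancel hsum)]

theorem IsLatinSquare.srg_colorable {t : ℕ} {f : Fin M × Fin M → Fin t}
    (hL : IsLatinSquare f) (hR : RemovesFadeState M S s f) :
    (srg M S s).Colorable (Finset.univ.image f).card := by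
  let symbol : Quotient (fadeSetoid M S s) → Finset.univ.image f :=
    Quotient.lift (fun p => ⟨f p, Finset.mem_image_of_mem f (Finset.mem_univ p)⟩)
      fun p q h => Subtype.ext (hR p q h)
  have hvalid : ∀ {u v}, (srg M S s).Adj u v → symbol u ≠ symbol v := by
    rintro _ _ ⟨hne, p, q, rfl, rfl, hline⟩ hpq
    exact hne (congrArg _ (isLatinSquare_iff.1 hL p q hline (congrArg Subtype.val hpq)))
  simpa only [Fintype.card_coe] using (SimpleGraph.Coloring.mk symbol hvalid).colorable

theorem SimpleGraph.Coloring.isLatinSquare_comp_mk (hS : Function.Injective S) (hs : s ≠ 0)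
    {n : ℕ} (C : (srg M S s).Coloring (Fin n)) :
    IsLatinSquare fun p => C (Quotient.mk (fadeSetoid M S s) p) := by
  refine isLatinSquare_iff.2 fun p q hline hC => ?_
  by_contra hne
  exact C.valid ⟨mt (eq_of_fadeSetoid_mk_eq hS hs hline) hne, p, q, rfl, rfl, hline⟩ hC

theorem SimpleGraph.Coloring.removesFadeState_comp_mk {n : ℕ}
    (C : (srg M S s).Coloring (Fin n)) :
    RemovesFadeState M S s fun p => C (Quotient.mk (fadeSetoid M S s) p) :=
  fun _ _ h => congrArg C (Quotient.sound h)

end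

theorem min_symbols_eq_chromaticNumber_general (M : ℕ)
    (S : Fin M → ℂ) (hS : Function.Injective S) (s : ℂ) (hs : s ≠ 0) :
    ((sInf {n : ℕ | ∃ (t : ℕ) (f : Fin M × Fin M → Fin t),
        IsLatinSquare f ∧ RemovesFadeState M S s f ∧
        (Finset.univ.image f).card = n} : ℕ) : ℕ∞) =
      (srg M S s).chromaticNumber := by
  set T := {n : ℕ | ∃ (t : ℕ) (f : Fin M × Fin M → Fin t),
    IsLatinSquare f ∧ RemovesFadeState M S s f ∧ (Finset.univ.image f).card = n}
  obtain ⟨C⟩ := (srg M S s).colorable_chromaticNumber_of_fintype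
  set f := fun p => C (Quotient.mk (fadeSetoid M S s) p)
  have hf : (Finset.univ.image f).card ∈ T :=
    ⟨_, f, C.isLatinSquare_comp_mk hS hs, C.removesFadeState_comp_mk, rfl⟩
  obtain ⟨t, g, hLg, hRg, hcard⟩ := Nat.sInf_mem ⟨_, hf⟩
  refine le_antisymm ?_ (hcard ▸ (hLg.srg_colorable hRg).chromaticNumber_le)
  calc ((sInf T : ℕ) : ℕ∞) ≤ (Finset.univ.image f).card := Nat.cast_le.2 (Nat.sInf_le hf)
    _ ≤ (srg M S s).chromaticNumber.toNat :=
      Nat.cast_le.2 ((Finset.card_le_univ _).trans_eq (Fintype.card_fin _))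
    _ ≤ (srg M S s).chromaticNumber := ENat.natCast_toNat_le_self _

/-- the minimum number of symbols actually used by a Latin square
of order `M` removing the fade state `s` equals the chromatic number of the
singularity removal graph. -/
theorem min_symbols_eq_chromaticNumber (M : ℕ) (hM : 2 ≤ M)
    (S : Fin M → ℂ) (hS : Function.Injective S) (s : ℂ) (hs : s ≠ 0) :
    ((sInf {n : ℕ | ∃ (t : ℕ) (f : Fin M × Fin M → Fin t),
        IsLatinSquare f ∧ RemovesFadeState M S s f ∧
        (Finset.univ.image f).card = n} : ℕ) : ℕ∞) =
      (srg M S s).chromaticNumber :=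
  min_symbols_eq_chromaticNumber_general M S hS s hs
end
end

section
/- Let M = n² with n ≥ 2 an integer, and let S be the square M-QAM signal set. Then each of the eight complex numbers 1+i, 1−i, −1+i, −1−i, (1+i)/2, (1−i)/2, (−1+i)/2, (−1−i)/2 is a singular fade state for S, i.e., for each such s there exist distinct pairs (a,b) ≠ (a',b') in (Fin M) × (Fin M) with S a + s·S b = S a' + s·S b'. -/
noncomputable section

/-!
Two signal points differing by `d` and two differing by `s * d` give two distinct cells with
the same received point `S a + s * S b`, so `s` is a singular fade state. Four neighbouring
points of the QAM grid form a square `z, z + 2, z + 2i, z + 2 + 2i`, whose sides and diagonals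
realise the ratios `±1 ± i`; the other four fade states are their inverses, and the set of
singular fade states is closed under inversion.
-/

open Complex

variable {α R : Type*}

def IsSingularFadeState [Ring R] (S : α → R) (s : R) : Prop :=
  s ≠ 0 ∧ ∃ p q : α × α, p ≠ q ∧ S p.1 + s * S p.2 = S q.1 + s * S q.2

namespace IsSingularFadeState

theorem of_sub_eq_mul_sub [Ring R] {S : α → R} {s : R} {x y z w : α} (hs : s ≠ 0)
    (hzw : z ≠ w) (h : S x - S y = s * (S z - S w)) : IsSingularFadeState S s := by
  refine ⟨hs, (x, w), (y, z), fun hp => hzw (Prod.ext_iff.mp hp).2.symm, ?_⟩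
  rw [mul_sub, sub_eq_sub_iff_add_eq_add] at h
  rw [h, add_comm]

theorem inv [DivisionRing R] {S : α → R} {s : R} (h : IsSingularFadeState S s) :
    IsSingularFadeState S s⁻¹ := by
  obtain ⟨hs, p, q, hpq, hS⟩ := h
  refine ⟨inv_ne_zero hs, p.swap, q.swap, fun h => hpq (Prod.swap_injective h), ?_⟩
  have := congrArg (s⁻¹ * ·) hS
  simp only [mul_add, ← mul_assoc, inv_mul_cancel₀ hs, one_mul] at this
  simpa only [Prod.fst_swap, Prod.snd_swap, add_comm] using this

end IsSingularFadeState

theorem isSingularFadeState_of_square {S : α → ℂ} {a b c e : α} {z d : ℂ} (hd : d ≠ 0)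
    (ha : S a = z) (hb : S b = z + d) (hc : S c = z + d * I) (he : S e = z + d + d * I)
    {t : ℂ} (ht : t ∈ ({1 + I, 1 - I, -1 + I, -1 - I} : Set ℂ)) :
    IsSingularFadeState S t := by
  have hab : b ≠ a := fun h => hd (by simpa [h, ha] using hb.symm)
  have key : ∀ x y, S x - S y = t * d → t ≠ 0 → IsSingularFadeState S t := fun x y h ht₀ =>
    .of_sub_eq_mul_sub ht₀ hab (by rw [h, ha, hb]; ring)
  simp only [Set.mem_insert_iff, Set.mem_singleton_iff] at ht
  rcases ht with rfl | rfl | rfl | rfl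
  · exact key e a (by rw [he, ha]; ring) (by simp [Complex.ext_iff])
  · exact key b c (by rw [hb, hc]; ring) (by simp [Complex.ext_iff])
  · exact key c b (by rw [hb, hc]; ring) (by simp [Complex.ext_iff])
  · exact key a e (by rw [he, ha]; ring) (by simp [Complex.ext_iff])

theorem QAM_mk_add_mul {n k l : ℕ} (hk : k < n) (h : k + n * l < n ^ 2) :
    QAM n ⟨k + n * l, h⟩ = (2 * l + 1 - n) + (2 * k + 1 - n) * I := by
  have hdiv : ((k + n * l : ℕ) : ℤ) / n = l := by
    rw [← Int.natCast_ediv, Nat.add_mul_div_left _ _ (by omega), Nat.div_eq_of_lt hk, zero_add]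
  have hmod : ((k + n * l : ℕ) : ℤ) % n = k := by
    rw [← Int.natCast_emod, Nat.add_mul_mod_self_left, Nat.mod_eq_of_lt hk]
  simp only [QAM, hdiv, hmod]
  push_cast
  ring

theorem QAM_has_square {n : ℕ} (hn : 2 ≤ n) :
    ∃ a b c e : Fin (n ^ 2), QAM n a = (1 - n) * (1 + I) ∧ QAM n b = (1 - n) * (1 + I) + 2 ∧
      QAM n c = (1 - n) * (1 + I) + 2 * I ∧ QAM n e = (1 - n) * (1 + I) + 2 + 2 * I := by
  have hlt : 1 + n * 1 < n ^ 2 := by nlinarith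
  refine ⟨⟨0 + n * 0, by omega⟩, ⟨0 + n * 1, by omega⟩, ⟨1 + n * 0, by omega⟩, ⟨1 + n * 1, hlt⟩,
    ?_, ?_, ?_, ?_⟩ <;> rw [QAM_mk_add_mul (by omega)] <;> push_cast <;> ring

theorem exists_eq_or_eq_inv_of_mem_eight {s : ℂ} (hs : s ∈ ({1 + I, 1 - I, -1 + I, -1 - I,
      (1 + I) / 2, (1 - I) / 2, (-1 + I) / 2, (-1 - I) / 2} : Set ℂ)) :
    ∃ t ∈ ({1 + I, 1 - I, -1 + I, -1 - I} : Set ℂ), s = t ∨ s = t⁻¹ := by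
  have half_eq_inv {u v : ℂ} (h : u * v = 2) : u / 2 = v⁻¹ :=
    eq_inv_of_mul_eq_one_left (by rw [div_mul_eq_mul_div, h, div_self two_ne_zero])
  simp only [Set.mem_insert_iff, Set.mem_singleton_iff] at hs ⊢
  rcases hs with rfl | rfl | rfl | rfl | rfl | rfl | rfl | rfl
  · exact ⟨_, .inl rfl, .inl rfl⟩
  · exact ⟨_, .inr (.inl rfl), .inl rfl⟩
  · exact ⟨_, .inr (.inr (.inl rfl)), .inl rfl⟩
  · exact ⟨_, .inr (.inr (.inr rfl)), .inl rfl⟩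
  · exact ⟨_, .inr (.inl rfl), .inr (half_eq_inv (by linear_combination -I_sq))⟩
  · exact ⟨_, .inl rfl, .inr (half_eq_inv (by linear_combination -I_sq))⟩
  · exact ⟨_, .inr (.inr (.inr rfl)), .inr (half_eq_inv (by linear_combination -I_sq))⟩
  · exact ⟨_, .inr (.inr (.inl rfl)), .inr (half_eq_inv (by linear_combination -I_sq))⟩

/-- each of the eight listed complex numbers is a singular fade
state for the square `n²`-QAM signal set. -/
theorem qam_eight_singular_fade_states (n : ℕ) (hn : 2 ≤ n) (s : ℂ)
    (hs : s ∈ ({1 + Complex.I, 1 - Complex.I, -1 + Complex.I, -1 - Complex.I,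
      (1 + Complex.I) / 2, (1 - Complex.I) / 2, (-1 + Complex.I) / 2,
      (-1 - Complex.I) / 2} : Set ℂ)) :
    s ≠ 0 ∧ ∃ p q : Fin (n ^ 2) × Fin (n ^ 2), p ≠ q ∧
      QAM n p.1 + s * QAM n p.2 = QAM n q.1 + s * QAM n q.2 := by
  obtain ⟨a, b, c, e, ha, hb, hc, he⟩ := QAM_has_square hn
  obtain ⟨t, ht, rfl | rfl⟩ := exists_eq_or_eq_inv_of_mem_eight hs
  · exact isSingularFadeState_of_square two_ne_zero ha hb hc he ht
  · exact (isSingularFadeState_of_square two_ne_zero ha hb hc he ht).inv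
end
end

section
/- Let M = 2^λ with λ ≥ 3, let S be the M-PSK signal set, and let k ∈ {1,…,M/2−1}. Set s equal to sin(kπ/M) or 1/sin(kπ/M) if k is even, and equal to sin(kπ/M)·exp(iπ/M) or (1/sin(kπ/M))·exp(iπ/M) if k is odd. Then the vital subgraph G_s^V of the singularity removal graph G_s is isomorphic to the circulant graph on ZMod M with connection set {k, −k, M/2}. -/
/-!
Write `PSK M m = ζ · ψ m` with `ζ = exp (iπ/M)` and `ψ` the standard character of `ZMod M`.
Since `2 sin(kπ/M) · exp(iεπ/M)` is a difference of two `M`-th roots of unity when `k + ε` is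
even, an identification `ψ A + s ψ B = ψ A' + s ψ B'` becomes an integer relation among six
`M`-th roots of unity. For `M = 2^λ` the minimal polynomial of `ψ 1` is `X^(M/2) + 1`, so such
a relation only holds if its coefficients are invariant under `j ↦ j + M/2`; comparing
coefficients then shows that every nontrivial class is a pair `{(t, t + c), (t + k, t + c + M/2)}`.
Two such pairs share a row iff their parameters differ by `±k` and a column iff they differ by
`M/2`. Replacing `s` by `1/s` transposes the cells, which reduces the `1/sin` cases to the `sin`
cases.
-/

noncomputable section

/-- The circulant graph on `ZMod M` with connection set `T`:
`i` and `j` are adjacent iff `i ≠ j` and `j - i ∈ T ∪ (-T)`. -/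
def circulant (M : ℕ) (T : Set (ZMod M)) : SimpleGraph (ZMod M) :=
  SimpleGraph.fromRel (fun i j => j - i ∈ T)

open Finset Complex

def finEquivZMod (M : ℕ) [NeZero M] : Fin M ≃ ZMod M where
  toFun i := (i : ℕ)
  invFun j := ⟨j.val, j.val_lt⟩
  left_inv i := Fin.ext (ZMod.val_cast_of_lt i.isLt)
  right_inv := ZMod.natCast_zmod_val

theorem ZMod.sum_eq_sum_range {M : ℕ} [NeZero M] {β : Type*} [AddCommMonoid β]
    (F : ZMod M → β) : ∑ j, F j = ∑ r ∈ range M, F r := by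
  rw [← (finEquivZMod M).sum_comp, ← Fin.sum_univ_eq_sum_range (fun r => F r)]
  rfl

theorem ZMod.two_pow_add_two_pow (l : ℕ) : (2 ^ l + 2 ^ l : ZMod (2 ^ (l + 1))) = 0 := by
  rw [← two_mul, ← pow_succ']
  exact_mod_cast ZMod.natCast_self _

theorem ZMod.two_pow_ne_zero (l : ℕ) : (2 ^ l : ZMod (2 ^ (l + 1))) ≠ 0 := by
  have : ((2 ^ l : ℕ) : ZMod (2 ^ (l + 1))) ≠ 0 := by
    rw [Ne, ZMod.natCast_eq_zero_iff, Nat.pow_dvd_pow_iff_le_right one_lt_two]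
    omega
  exact_mod_cast this

/-- The coefficient of `ψ j` in
`2 ψ A - 2 ψ A' - ψ (B' + n) + ψ (B' + n - k) + ψ (B + n) - ψ (B + n - k)`. -/
def fadeCoeff {R : Type*} [CommRing R] [DecidableEq R] (A A' B B' n k j : R) : ℤ :=
  (if A = j then 2 else 0) + (if A' = j then -2 else 0) + (if B' + n = j then -1 else 0) +
    (if B' + n - k = j then 1 else 0) + (if B + n = j then 1 else 0) +
    (if B + n - k = j then -1 else 0)

theorem eq_add_of_fadeCoeff_add_eq {R : Type*} [CommRing R] [DecidableEq R]
    {h k n A B A' B' : R} (hh : h ≠ 0) (hhh : h + h = 0) (hk : k + k ≠ 0) (hA : A ≠ A')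
    (hB : B ≠ B') (h₁ : fadeCoeff A A' B B' n k (A + h) = fadeCoeff A A' B B' n k A)
    (h₂ : fadeCoeff A A' B B' n k (A' + h) = fadeCoeff A A' B B' n k A') :
    (B = A + (k - n) ∧ A' = A + k ∧ B' = A + (k - n) + h) ∨
      (B' = A' + (k - n) ∧ A = A' + k ∧ B = A' + (k - n) + h) := by
  unfold fadeCoeff at h₁ h₂
  grind (splits := 100)

section AddChar

theorem AddChar.apply_natCast {N : ℕ} {R : Type*} [Monoid R] (ψ : AddChar (ZMod N) R) (n : ℕ) :
    ψ n = ψ 1 ^ n := by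
  rw [← ψ.map_nsmul_eq_pow, nsmul_one]

theorem AddChar.injective_of_isPrimitiveRoot {N : ℕ} [NeZero N] {R : Type*} [CommMonoid R]
    {ψ : AddChar (ZMod N) R} (hψ : IsPrimitiveRoot (ψ 1) N) : Function.Injective ψ := by
  intro a b hab
  rw [← ZMod.natCast_zmod_val a, ← ZMod.natCast_zmod_val b, ψ.apply_natCast,
    ψ.apply_natCast] at hab
  rw [← ZMod.natCast_zmod_val a, ← ZMod.natCast_zmod_val b, hψ.pow_inj a.val_lt b.val_lt hab]

variable {K : Type*} [Field K] {l : ℕ} {ψ : AddChar (ZMod (2 ^ (l + 1))) K}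

theorem AddChar.apply_two_pow_eq_neg_one (hψ : IsPrimitiveRoot (ψ 1) (2 ^ (l + 1))) :
    ψ (2 ^ l) = -1 := by
  have := hψ.pow_of_dvd (p := 2 ^ l) (by positivity) (pow_dvd_pow 2 l.le_succ)
  rw [show 2 ^ (l + 1) / 2 ^ l = 2 by rw [pow_succ, Nat.mul_div_cancel_left _ (by positivity)]]
    at this
  rw [← this.eq_neg_one_of_two_right, ← ψ.apply_natCast]
  push_cast
  rfl

theorem AddChar.coeff_add_two_pow_eq_of_sum_eq_zero [CharZero K]
    (hψ : IsPrimitiveRoot (ψ 1) (2 ^ (l + 1))) {f : ZMod (2 ^ (l + 1)) → ℤ}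
    (hf : ∑ j, (f j : K) * ψ j = 0) (j : ZMod (2 ^ (l + 1))) : f (j + 2 ^ l) = f j := by
  set ω := ψ 1
  set g : ℕ → ℚ := fun r => f r - f (r + 2 ^ l)
  have hsum : ∑ r ∈ range (2 ^ l), g r • ω ^ r = 0 := by
    rw [ZMod.sum_eq_sum_range, show range (2 ^ (l + 1)) = range (2 ^ l + 2 ^ l) by
      rw [pow_succ, mul_two], sum_range_add] at hf
    rw [← hf, ← sum_add_distrib]
    refine sum_congr rfl fun r _ => ?_
    have hω : ω ^ (2 ^ l + r) = -ω ^ r := by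
      rw [pow_add ω, ← ψ.apply_natCast, Nat.cast_pow, Nat.cast_ofNat,
        AddChar.apply_two_pow_eq_neg_one hψ, neg_one_mul]
    rw [ψ.apply_natCast, ψ.apply_natCast, hω, Rat.smul_def, add_comm (2 ^ l)]
    push_cast [g]
    ring
  have hdeg : (minpoly ℚ ω).natDegree = 2 ^ l := by
    rw [← Polynomial.cyclotomic_eq_minpoly_rat hψ (by positivity),
      Polynomial.natDegree_cyclotomic, Nat.totient_prime_pow_succ Nat.prime_two,
      Nat.add_one_sub_one, mul_one]
  have hg : ∀ r : ℕ, r < 2 ^ l → f r = f (r + 2 ^ l) := fun r hr => by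
    have := Fintype.linearIndependent_iff.mp (linearIndependent_pow ω) (fun i => g i)
      (by rw [Fin.sum_univ_eq_sum_range (fun r => g r • ω ^ r), hdeg, hsum]) ⟨r, hdeg ▸ hr⟩
    simpa only [g, sub_eq_zero, Int.cast_inj] using this
  obtain ⟨r, hr, rfl | rfl⟩ : ∃ r : ℕ, r < 2 ^ l ∧ (j = r ∨ j = r + 2 ^ l) := by
    have hj : j.val < 2 ^ l + 2 ^ l := by rw [← two_mul, ← pow_succ']; exact j.val_lt
    by_cases hjl : j.val < 2 ^ l
    · exact ⟨j.val, hjl, Or.inl (ZMod.natCast_zmod_val j).symm⟩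
    · refine ⟨j.val - 2 ^ l, by omega, Or.inr ?_⟩
      rw [Nat.cast_sub (by omega), ZMod.natCast_zmod_val]
      push_cast
      ring
  · exact (hg r hr).symm
  · rw [add_assoc, ZMod.two_pow_add_two_pow, add_zero, hg r hr]

theorem AddChar.add_mul_eq_add_mul_iff [CharZero K] (hψ : IsPrimitiveRoot (ψ 1) (2 ^ (l + 1)))
    {s : K} {k n : ZMod (2 ^ (l + 1))} (hk : k + k ≠ 0) (hs : 2 * s = ψ n - ψ (n - k))
    (A B A' B' : ZMod (2 ^ (l + 1))) :
    ψ A + s * ψ B = ψ A' + s * ψ B' ↔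
      (A = A' ∧ B = B') ∨ (B = A + (k - n) ∧ A' = A + k ∧ B' = A + (k - n) + 2 ^ l) ∨
        (B' = A' + (k - n) ∧ A = A' + k ∧ B = A' + (k - n) + 2 ^ l) := by
  have hinj := AddChar.injective_of_isPrimitiveRoot hψ
  have hhalf : ∀ x, ψ (x + 2 ^ l) = -ψ x := fun x => by
    rw [ψ.map_add_eq_mul, AddChar.apply_two_pow_eq_neg_one hψ, mul_neg_one]
  have hk0 : k ≠ 0 := by rintro rfl; simp at hk
  have hs0 : s ≠ 0 := by
    rintro rfl
    have : ψ (n - k) = ψ n := by linear_combination hs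
    exact hk0 (sub_eq_self.mp (hinj this))
  constructor
  · intro heq
    by_cases hA : A = A'
    · subst hA
      refine Or.inl ⟨rfl, hinj (mul_left_cancel₀ hs0 (by linear_combination heq))⟩
    by_cases hB : B = B'
    · subst hB
      exact absurd (hinj (by linear_combination heq)) hA
    right
    have hsum : ∑ j, (fadeCoeff A A' B B' n k j : K) * ψ j = 0 := by
      simp only [fadeCoeff, Int.cast_add, Int.cast_ite, add_mul, ite_mul, sum_add_distrib,
        sum_ite_eq, mem_univ, if_true, Int.cast_zero, zero_mul]
      simp only [add_sub_assoc, ψ.map_add_eq_mul]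
      push_cast
      linear_combination 2 * heq + (ψ B' - ψ B) * hs
    exact eq_add_of_fadeCoeff_add_eq (ZMod.two_pow_ne_zero l) (ZMod.two_pow_add_two_pow l) hk hA hB
      (AddChar.coeff_add_two_pow_eq_of_sum_eq_zero hψ hsum A)
      (AddChar.coeff_add_two_pow_eq_of_sum_eq_zero hψ hsum A')
  · have hpair : ∀ A,
        ψ A + s * ψ (A + (k - n)) = ψ (A + k) + s * ψ (A + (k - n) + 2 ^ l) := by
      intro A
      have hkn : 2 * s * ψ (k - n) = ψ k - 1 := by
        rw [hs, sub_mul, ← ψ.map_add_eq_mul, ← ψ.map_add_eq_mul, add_sub_cancel,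
          sub_add_sub_cancel, sub_self, ψ.map_zero_eq_one]
      rw [hhalf, ψ.map_add_eq_mul A (k - n), ψ.map_add_eq_mul A k]
      linear_combination ψ A * hkn
    rintro (⟨rfl, rfl⟩ | ⟨rfl, rfl, rfl⟩ | ⟨rfl, rfl, rfl⟩)
    · rfl
    · exact hpair A
    · exact (hpair A').symm

end AddChar

theorem two_mul_sin_mul_exp (x y : ℝ) :
    2 * (Real.sin x * exp (y * I)) =
      exp ((y + x - Real.pi / 2) * I) - exp ((y - x - Real.pi / 2) * I) := by
  have hI : exp (-(Real.pi / 2 * I)) = -I := by rw [exp_neg, exp_pi_div_two_mul_I, inv_I]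
  rw [show ((y : ℂ) + x - Real.pi / 2) * I = y * I + x * I + -(Real.pi / 2 * I) by ring,
    show ((y : ℂ) - x - Real.pi / 2) * I = y * I + -x * I + -(Real.pi / 2 * I) by ring,
    exp_add, exp_add, exp_add, exp_add, hI, ofReal_sin, sin]
  ring

def sinFadeState (M k : ℕ) (ε : ℤ) : ℂ :=
  Real.sin (k * Real.pi / M) * exp (ε * Real.pi / M * I)

-- The factor `1 / (2i)` of the sine is the root of unity `ψ (-q)`, where `q = M / 4`.
theorem two_mul_sinFadeState {M k : ℕ} [NeZero M] {ε n q : ℤ} (hn : (k : ℤ) + ε = 2 * n)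
    (hq : (M : ℤ) = 4 * q) :
    2 * sinFadeState M k ε =
      ZMod.stdAddChar ((n - q : ℤ) : ZMod M) -
        ZMod.stdAddChar (((n - q : ℤ) : ZMod M) - (k : ZMod M)) := by
  have hM : (M : ℂ) ≠ 0 := Nat.cast_ne_zero.mpr (NeZero.ne M)
  have hn' : (k : ℂ) + ε = 2 * n := by exact_mod_cast hn
  have hq' : (M : ℂ) = 4 * q := by exact_mod_cast hq
  rw [sinFadeState,
    show ((n - q : ℤ) : ZMod M) - k = ((n - q - k : ℤ) : ZMod M) by push_cast; ring,
    ZMod.stdAddChar_coe, ZMod.stdAddChar_coe,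
    show (ε : ℂ) * Real.pi / M * I = ((ε * Real.pi / M : ℝ) : ℂ) * I by push_cast; ring,
    two_mul_sin_mul_exp]
  congr 2 <;> push_cast <;> field_simp <;> linear_combination 2 * hn' - hq'

theorem vital_nonempty_iso_of_cellEquiv {M : ℕ} {S S' : Fin M → ℂ} {s s' : ℂ}
    (σ : Fin M × Fin M ≃ Fin M × Fin M)
    (hσ : ∀ p q, S p.1 + s * S p.2 = S q.1 + s * S q.2 ↔
      S' (σ p).1 + s' * S' (σ p).2 = S' (σ q).1 + s' * S' (σ q).2)
    (hline : ∀ p q, (p.1 = q.1 ∨ p.2 = q.2) ↔ ((σ p).1 = (σ q).1 ∨ (σ p).2 = (σ q).2)) :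
    Nonempty (vital M S s ≃g vital M S' s') := by
  set e : Quotient (fadeSetoid M S s) ≃ Quotient (fadeSetoid M S' s') := Quotient.congr σ hσ
  have he : ∀ p, e ⟦p⟧ = ⟦σ p⟧ := fun p => Quotient.congr_mk σ hσ p
  have he' : ∀ p', e ⟦σ.symm p'⟧ = ⟦p'⟧ := fun p' => by rw [he, σ.apply_symm_apply]
  have hmem : ∀ u, u ∈ vitalSet M S s ↔ e u ∈ vitalSet M S' s' := by
    refine fun u => ⟨?_, ?_⟩
    · rintro ⟨p, q, hpq, rfl, hq⟩
      exact ⟨σ p, σ q, σ.injective.ne hpq, (he p).symm, by rw [← he, hq]⟩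
    · rintro ⟨p', q', hpq, hp, hq⟩
      exact ⟨σ.symm p', σ.symm q', σ.symm.injective.ne hpq, e.injective (by rw [he', hp]),
        e.injective (by rw [he', hq])⟩
  have hadj : ∀ u v, (srg M S' s').Adj (e u) (e v) ↔ (srg M S s).Adj u v := by
    refine fun u v => and_congr e.injective.ne_iff ⟨?_, ?_⟩
    · rintro ⟨p', q', hp, hq, hl⟩
      refine ⟨σ.symm p', σ.symm q', e.injective (by rw [he', hp]),
        e.injective (by rw [he', hq]), (hline _ _).mpr (by simpa using hl)⟩
    · rintro ⟨p, q, rfl, rfl, hl⟩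
      exact ⟨σ p, σ q, (he p).symm, (he q).symm, (hline p q).mp hl⟩
  exact ⟨⟨e.subtypeEquiv hmem, hadj _ _⟩⟩

theorem vital_nonempty_iso_inv {M : ℕ} (S : Fin M → ℂ) {s : ℂ} (hs : s ≠ 0) :
    Nonempty (vital M S s ≃g vital M S s⁻¹) :=
  vital_nonempty_iso_of_cellEquiv (Equiv.prodComm _ _)
    (fun p q => by
      simp only [Equiv.prodComm_apply, Prod.fst_swap, Prod.snd_swap]
      exact ⟨fun h => by linear_combination s⁻¹ * h + (S q.2 - S p.2) * mul_inv_cancel₀ hs,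
        fun h => by linear_combination s * h + (S q.1 - S p.1) * mul_inv_cancel₀ hs⟩)
    (fun p q => or_comm)

theorem vital_nonempty_iso_of_pairs {M : ℕ} {S : Fin M → ℂ} {s : ℂ} {T : Type*}
    {G : SimpleGraph T} (cell partner : T → Fin M × Fin M) (hcell : Function.Injective cell)
    (hne : ∀ t t', cell t ≠ partner t')
    (hrel : ∀ p q, S p.1 + s * S p.2 = S q.1 + s * S q.2 ↔
      p = q ∨ ∃ t, (p = cell t ∧ q = partner t) ∨ (q = cell t ∧ p = partner t))
    (hadj : ∀ t t', G.Adj t t' ↔ t ≠ t' ∧ ∃ p q : Fin M × Fin M,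
      (p = cell t ∨ p = partner t) ∧ (q = cell t' ∨ q = partner t') ∧
        (p.1 = q.1 ∨ p.2 = q.2)) :
    Nonempty (vital M S s ≃g G) := by
  have hclass : ∀ t p, (⟦p⟧ : Quotient (fadeSetoid M S s)) = ⟦cell t⟧ ↔
      p = cell t ∨ p = partner t := by
    intro t p
    refine Quotient.eq.trans ((hrel p (cell t)).trans ⟨?_, ?_⟩)
    · rintro (rfl | ⟨u, ⟨rfl, h⟩ | ⟨h, rfl⟩⟩)
      · exact Or.inl rfl
      · exact absurd h (hne t u)
      · exact Or.inr (by rw [hcell h])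
    · rintro (rfl | rfl)
      · exact Or.inl rfl
      · exact Or.inr ⟨t, Or.inr ⟨rfl, rfl⟩⟩
  have hclass_inj : ∀ t t',
      (⟦cell t⟧ : Quotient (fadeSetoid M S s)) = ⟦cell t'⟧ ↔ t = t' := by
    refine fun t t' => ⟨fun h => ?_, fun h => h ▸ rfl⟩
    rcases (hclass t' (cell t)).mp h with h | h
    · exact hcell h
    · exact absurd h (hne t t')
  let f : T → vitalSet M S s := fun t =>
    ⟨⟦cell t⟧, cell t, partner t, hne t t, rfl, (hclass t _).mpr (Or.inr rfl)⟩
  have hf : Function.Bijective f := by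
    refine ⟨fun t t' h => (hclass_inj t t').mp (congrArg Subtype.val h), ?_⟩
    rintro ⟨u, p, q, hpq, rfl, hq⟩
    obtain ⟨t, ht⟩ : ∃ t, p = cell t ∨ p = partner t := by
      rcases (hrel p q).mp (Quotient.exact hq.symm) with h | ⟨t, ⟨h, -⟩ | ⟨-, h⟩⟩
      · exact absurd h hpq
      · exact ⟨t, Or.inl h⟩
      · exact ⟨t, Or.inr h⟩
    exact ⟨t, Subtype.ext ((hclass t p).mpr ht).symm⟩
  refine ⟨(SimpleGraph.Iso.symm ⟨Equiv.ofBijective f hf, fun {t t'} => ?_⟩)⟩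
  change (srg M S s).Adj ⟦cell t⟧ ⟦cell t'⟧ ↔ G.Adj t t'
  simp only [srg, ne_eq, hclass_inj, hclass, hadj]

theorem PSK_eq_exp_mul_stdAddChar (M : ℕ) [NeZero M] (m : Fin M) :
    PSK M m = exp (Real.pi / M * I) * ZMod.stdAddChar (finEquivZMod M m) := by
  rw [show (finEquivZMod M m) = ((m : ℕ) : ℤ) by simp [finEquivZMod],
    ZMod.stdAddChar_coe, PSK, ← exp_add]
  congr 1
  push_cast
  ring

theorem isPrimitiveRoot_stdAddChar_one (M : ℕ) [NeZero M] :
    IsPrimitiveRoot (ZMod.stdAddChar (1 : ZMod M)) M := by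
  rw [← Int.cast_one, ZMod.stdAddChar_coe, Int.cast_one, mul_one]
  exact Complex.isPrimitiveRoot_exp M (NeZero.ne M)

theorem vital_PSK_nonempty_iso_circulant {l : ℕ} {s : ℂ} {k n : ZMod (2 ^ (l + 1))}
    (hk : k + k ≠ 0) (hs : 2 * s = ZMod.stdAddChar n - ZMod.stdAddChar (n - k)) :
    Nonempty (vital (2 ^ (l + 1)) (PSK (2 ^ (l + 1))) s ≃g
      circulant (2 ^ (l + 1)) {k, -k, 2 ^ l}) := by
  set ι := finEquivZMod (2 ^ (l + 1)) with hι
  have hhalf := ZMod.two_pow_add_two_pow l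
  have hhalf0 := ZMod.two_pow_ne_zero l
  refine vital_nonempty_iso_of_pairs (fun t => (ι.symm t, ι.symm (t + (k - n))))
    (fun t => (ι.symm (t + k), ι.symm (t + (k - n) + 2 ^ l))) ?_ ?_ ?_ ?_
  · intro t t' h
    simpa using congrArg (ι ∘ Prod.fst) h
  · intro t t' h
    simp only [Prod.ext_iff, ι.symm.injective.eq_iff] at h
    grind
  · intro p q
    simp only [PSK_eq_exp_mul_stdAddChar, ← hι]
    rw [mul_left_comm s, mul_left_comm s, ← mul_add, ← mul_add,
      mul_right_inj' (Complex.exp_ne_zero _),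
      AddChar.add_mul_eq_add_mul_iff (isPrimitiveRoot_stdAddChar_one _) hk hs]
    simp only [Prod.ext_iff, Equiv.eq_symm_apply, EmbeddingLike.apply_eq_iff_eq, exists_or,
      and_assoc, exists_eq_left']
  · intro t t'
    simp only [circulant, SimpleGraph.fromRel_adj, Set.mem_insert_iff, Set.mem_singleton_iff,
      or_and_right, exists_or, exists_and_left, exists_eq_left, ι.symm.injective.eq_iff, ne_eq]
    grind

theorem vital_PSK_nonempty_iso_circulant_of_sinFadeState {l k : ℕ} {ε n : ℤ} {s : ℂ}
    (hk1 : 1 ≤ k) (hk2 : k < 2 ^ (l + 2)) (hn : (k : ℤ) + ε = 2 * n)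
    (hs : s = sinFadeState (2 ^ (l + 3)) k ε ∨ s⁻¹ = sinFadeState (2 ^ (l + 3)) k ε) :
    Nonempty (vital (2 ^ (l + 3)) (PSK (2 ^ (l + 3))) s ≃g
      circulant (2 ^ (l + 3))
        {(k : ZMod (2 ^ (l + 3))), -(k : ZMod (2 ^ (l + 3))), 2 ^ (l + 2)}) := by
  have hkM : k < 2 ^ (l + 3) := by rw [pow_succ]; omega
  have hkk : (k : ZMod (2 ^ (l + 3))) + k ≠ 0 := by
    rw [← Nat.cast_add, Ne, ZMod.natCast_eq_zero_iff]
    exact Nat.not_dvd_of_pos_of_lt (by omega) (by rw [pow_succ]; omega)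
  have hsin : Real.sin (k * Real.pi / (2 ^ (l + 3) : ℕ)) ≠ 0 := by
    refine (Real.sin_pos_of_pos_of_lt_pi (by positivity) ?_).ne'
    rw [div_lt_iff₀ (by positivity), mul_comm]
    exact mul_lt_mul_of_pos_left (by exact_mod_cast hkM) Real.pi_pos
  obtain ⟨e⟩ := vital_PSK_nonempty_iso_circulant (l := l + 2) hkk
    (two_mul_sinFadeState (q := 2 ^ (l + 1)) hn (by push_cast; ring))
  rcases hs with rfl | hs
  · exact ⟨e⟩
  · have hs0 : s ≠ 0 := by
      rintro rfl
      rw [inv_zero, eq_comm, sinFadeState, mul_eq_zero, ofReal_eq_zero] at hs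
      exact hs.elim hsin (exp_ne_zero _)
    obtain ⟨e'⟩ := vital_nonempty_iso_inv (PSK _) hs0
    rw [hs] at e'
    exact ⟨e'.trans e⟩

/-- for `M = 2^λ`-PSK and `k ∈ {1, …, M/2 − 1}`, with singular
fade state of absolute value `sin(kπ/M)` or `1/sin(kπ/M)`, the vital subgraph
is isomorphic to the circulant graph on `ZMod M` with connection set
`{k, -k, M/2}`. -/
theorem psk_vital_iso_circulant (lam M k : ℕ) (hlam : 3 ≤ lam) (hM : M = 2 ^ lam)
    (hk1 : 1 ≤ k) (hk2 : k ≤ M / 2 - 1) (s : ℂ)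
    (hs : if k % 2 = 0 then
        s = ((Real.sin (k * Real.pi / M) : ℝ) : ℂ) ∨
        s = ((1 / Real.sin (k * Real.pi / M) : ℝ) : ℂ)
      else
        s = ((Real.sin (k * Real.pi / M) : ℝ) : ℂ) *
            Complex.exp (Complex.I * (Real.pi : ℂ) / (M : ℂ)) ∨
        s = ((1 / Real.sin (k * Real.pi / M) : ℝ) : ℂ) *
            Complex.exp (Complex.I * (Real.pi : ℂ) / (M : ℂ))) :
    Nonempty (vital M (PSK M) s ≃g
      circulant M {(k : ZMod M), -(k : ZMod M), ((M / 2 : ℕ) : ZMod M)}) := by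
  obtain ⟨l, rfl⟩ : ∃ l, lam = l + 3 := ⟨lam - 3, by omega⟩
  subst hM
  rw [show 2 ^ (l + 3) / 2 = 2 ^ (l + 2) by rw [pow_succ, Nat.mul_div_cancel _ two_pos]] at hk2 ⊢
  rw [Nat.cast_pow, Nat.cast_ofNat]
  obtain ⟨ε, n, hn, hs⟩ : ∃ ε n : ℤ, (k : ℤ) + ε = 2 * n ∧
      (s = sinFadeState (2 ^ (l + 3)) k ε ∨ s⁻¹ = sinFadeState (2 ^ (l + 3)) k ε) := by
    simp only [sinFadeState]
    split_ifs at hs with hpar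
    · rcases hs with hs | hs
      · exact ⟨0, k / 2, by omega, Or.inl (by simp [hs])⟩
      · exact ⟨0, k / 2, by omega, Or.inr (by simp [hs])⟩
    · rcases hs with hs | hs
      · exact ⟨1, (k + 1) / 2, by omega, Or.inl (by rw [hs]; congr 2; push_cast; ring)⟩
      · refine ⟨-1, ((k : ℤ) - 1) / 2, by omega, Or.inr ?_⟩
        rw [hs, mul_inv, ← exp_neg, one_div, ofReal_inv, inv_inv]
        congr 2
        push_cast
        ring
  exact vital_PSK_nonempty_iso_circulant_of_sinFadeState hk1 (by omega) hn hs
end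
end

section
/- Let M ≥ 2 and let P : (Fin M) × (Fin M) → Option (Fin M) be a partial Latin square of order M. Suppose the set of symbols appearing in P has cardinality strictly less than M, and every symbol that appears in P appears in exactly M cells. Then there exists a Latin square f : (Fin M) × (Fin M) → Fin M of order M with symbols in Fin M that completes P, i.e., f(a,b) = x whenever P(a,b) = some x. -/
noncomputable section

/-- A partial Latin square of order `M` with symbols in `Fin M`: no symbol
occurs twice in a row or twice in a column. -/
def IsPartialLatinSquare {M : ℕ} (P : Fin M × Fin M → Option (Fin M)) : Prop :=
  (∀ (a b b' : Fin M) (x : Fin M), P (a, b) = some x → P (a, b') = some x → b = b') ∧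
  (∀ (a a' b : Fin M) (x : Fin M), P (a, b) = some x → P (a', b) = some x → a = a')

/-!
Every symbol that appears in `P` appears `M` times with no repetition in a line, so it occupies a
full transversal: exactly one cell in each row and in each column. Hence, if `k` symbols appear,
every row and every column contains exactly `M - k` empty cells. When `k < M`, Hall's condition for
the bipartite graph of empty cells follows by double counting, so the empty cells contain a
transversal; filling it with an unused symbol preserves all hypotheses with `k + 1` symbols.
When `k = M` there are no empty cells and `P` itself is a Latin square.
-/

open Finset Function

theorem exists_injective_of_forall_le_card_of_forall_card_le {α β : Type*} [Fintype α]
    [Fintype β] (r : α → β → Prop) [DecidableRel r] {d : ℕ} (hd : 0 < d)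
    (hrow : ∀ a, d ≤ #{b | r a b}) (hcol : ∀ b, #{a | r a b} ≤ d) :
    ∃ g : α → β, Injective g ∧ ∀ a, r a (g a) := by
  refine (Fintype.all_card_le_filter_rel_iff_exists_injective r).mp fun s => ?_
  refine Nat.le_of_mul_le_mul_right (card_mul_le_card_mul r (fun a ha => ?_) fun b _ => ?_) hd
  · refine (hrow a).trans (card_le_card fun b hb => ?_)
    simp only [mem_filter, mem_univ, true_and] at hb
    simpa [mem_bipartiteAbove] using ⟨⟨a, ha, hb⟩, hb⟩
  · exact (card_le_card (filter_subset_filter _ (subset_univ s))).trans (hcol b)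

theorem card_filter_eq_none {ι σ : Type*} [Fintype ι] [DecidableEq σ] (r : ι → Option σ)
    (s : Finset σ) (hr : ∀ i j x, r i = some x → r j = some x → i = j)
    (hs : ∀ x, x ∈ s ↔ ∃ i, r i = some x) :
    #{i | r i = none} = Fintype.card ι - #s := by
  have hfilled : #{i | r i ≠ none} = #s := by
    rw [← card_image_of_injOn (f := r), ← card_image_of_injective s (Option.some_injective σ)]
    · congr 1
      ext (_ | x)
      · simp
      · simpa [hs] using ⟨fun ⟨i, _, h⟩ => ⟨i, h⟩, fun ⟨i, h⟩ => ⟨i, by simp [h], h⟩⟩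
    · intro i hi j _ hij
      obtain ⟨x, hx⟩ := Option.ne_none_iff_exists'.mp (mem_filter.mp hi).2
      exact hr i j x hx (hij ▸ hx)
  rw [← hfilled, ← card_univ, ← card_filter_add_card_filter_not (s := univ) fun i => r i = none]
  simp

variable {M : ℕ}

def usedSymbols (P : Fin M × Fin M → Option (Fin M)) : Finset (Fin M) :=
  univ.filter fun x => ∃ c, P c = some x

@[simp]
theorem mem_usedSymbols {P : Fin M × Fin M → Option (Fin M)} {x : Fin M} :
    x ∈ usedSymbols P ↔ ∃ c, P c = some x := by
  simp [usedSymbols]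

def UsedSymbolsMeetEveryLine (P : Fin M × Fin M → Option (Fin M)) : Prop :=
  ∀ x ∈ usedSymbols P, (∀ a, ∃ b, P (a, b) = some x) ∧ ∀ b, ∃ a, P (a, b) = some x

def Completes (f : Fin M × Fin M → Fin M) (P : Fin M × Fin M → Option (Fin M)) : Prop :=
  ∀ c x, P c = some x → f c = x

def addTransversal (P : Fin M × Fin M → Option (Fin M)) (g : Fin M → Fin M) (x : Fin M) :
    Fin M × Fin M → Option (Fin M) :=
  fun c => if c.2 = g c.1 then some x else P c

namespace IsPartialLatinSquare

variable {P : Fin M × Fin M → Option (Fin M)}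

theorem usedSymbolsMeetEveryLine_of_card_eq (hP : IsPartialLatinSquare P)
    (happ : ∀ x : Fin M, (∃ c, P c = some x) →
      (univ.filter fun c : Fin M × Fin M => P c = some x).card = M) :
    UsedSymbolsMeetEveryLine P := by
  intro x hx
  set S := univ.filter fun c : Fin M × Fin M => P c = some x
  have hS : #S = Fintype.card (Fin M) := by rw [happ x (mem_usedSymbols.mp hx), Fintype.card_fin]
  have hcells : ∀ {a b}, (a, b) ∈ S ↔ P (a, b) = some x := by simp [S]
  constructor
  · intro a
    have hrows : S.image Prod.fst = univ := by
      refine eq_univ_of_card _ ((card_image_of_injOn ?_).trans hS)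
      rintro ⟨a, b⟩ hab ⟨a', b'⟩ hab' (rfl : a = a')
      rw [hP.1 a b b' x (hcells.mp hab) (hcells.mp hab')]
    obtain ⟨⟨a, b⟩, hab, rfl⟩ := mem_image.mp (hrows ▸ mem_univ a)
    exact ⟨b, hcells.mp hab⟩
  · intro b
    have hcols : S.image Prod.snd = univ := by
      refine eq_univ_of_card _ ((card_image_of_injOn ?_).trans hS)
      rintro ⟨a, b⟩ hab ⟨a', b'⟩ hab' (rfl : b = b')
      rw [hP.2 a a' b x (hcells.mp hab) (hcells.mp hab')]
    obtain ⟨⟨a, b⟩, hab, rfl⟩ := mem_image.mp (hcols ▸ mem_univ b)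
    exact ⟨a, hcells.mp hab⟩

theorem card_row_eq_none (hP : IsPartialLatinSquare P) (hfull : UsedSymbolsMeetEveryLine P)
    (a : Fin M) :
    #{b | P (a, b) = none} = M - #(usedSymbols P) := by
  simpa using card_filter_eq_none (fun b => P (a, b)) (usedSymbols P) (fun b b' x => hP.1 a b b' x)
    fun x => ⟨fun hx => (hfull x hx).1 a, fun ⟨b, hb⟩ => mem_usedSymbols.mpr ⟨_, hb⟩⟩

theorem card_col_eq_none (hP : IsPartialLatinSquare P) (hfull : UsedSymbolsMeetEveryLine P)
    (b : Fin M) :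
    #{a | P (a, b) = none} = M - #(usedSymbols P) := by
  simpa using card_filter_eq_none (fun a => P (a, b)) (usedSymbols P) (fun a a' x => hP.2 a a' b x)
    fun x => ⟨fun hx => (hfull x hx).2 b, fun ⟨a, ha⟩ => mem_usedSymbols.mpr ⟨_, ha⟩⟩

theorem exists_completion_of_forall_ne_none (hP : IsPartialLatinSquare P)
    (hfilled : ∀ c, P c ≠ none) :
    ∃ f : Fin M × Fin M → Fin M, IsLatinSquare f ∧ Completes f P := by
  have hsome : ∀ c, (P c).isSome := fun c => Option.isSome_iff_ne_none.mpr (hfilled c)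
  have hget : ∀ c, P c = some ((P c).get (hsome c)) := fun c => (Option.some_get _).symm
  refine ⟨fun c => (P c).get (hsome c), ⟨fun a b b' h => ?_, fun b a a' h => ?_⟩, ?_⟩
  · exact hP.1 a b b' _ (hget _) ((hget _).trans (congrArg some h.symm))
  · exact hP.2 a a' b _ (hget _) ((hget _).trans (congrArg some h.symm))
  · intro c x hc
    simp [hc]

end IsPartialLatinSquare

section addTransversal

variable {P : Fin M × Fin M → Option (Fin M)} {g : Fin M → Fin M} {x : Fin M}

theorem addTransversal_eq_some {c : Fin M × Fin M} {y : Fin M} (hx : x ∉ usedSymbols P)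
    (hc : addTransversal P g x c = some y) :
    (c.2 = g c.1 ∧ y = x) ∨ (y ≠ x ∧ P c = some y) := by
  unfold addTransversal at hc
  split_ifs at hc with h
  · exact .inl ⟨h, (Option.some_injective _ hc).symm⟩
  · exact .inr ⟨fun hy => hx (mem_usedSymbols.mpr ⟨c, hy ▸ hc⟩), hc⟩

theorem addTransversal_eq_some_of_eq_some (hempty : ∀ a, P (a, g a) = none)
    {c : Fin M × Fin M} {y : Fin M} (hc : P c = some y) : addTransversal P g x c = some y := by
  obtain ⟨a, b⟩ := c
  have hb : b ≠ g a := by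
    rintro rfl
    simp [hempty] at hc
  simp [addTransversal, hb, hc]

theorem isPartialLatinSquare_addTransversal (hP : IsPartialLatinSquare P) (hg : Injective g)
    (hx : x ∉ usedSymbols P) : IsPartialLatinSquare (addTransversal P g x) := by
  constructor
  · intro a b b' y h h'
    rcases addTransversal_eq_some hx h with ⟨hb, rfl⟩ | ⟨hy, hb⟩ <;>
      rcases addTransversal_eq_some hx h' with ⟨hb', hy'⟩ | ⟨hy', hb'⟩
    · exact hb.trans hb'.symm
    · exact absurd rfl hy'
    · exact absurd hy' hy
    · exact hP.1 a b b' y hb hb'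
  · intro a a' b y h h'
    rcases addTransversal_eq_some hx h with ⟨hb, rfl⟩ | ⟨hy, hb⟩ <;>
      rcases addTransversal_eq_some hx h' with ⟨hb', hy'⟩ | ⟨hy', hb'⟩
    · exact hg (hb.symm.trans hb')
    · exact absurd rfl hy'
    · exact absurd hy' hy
    · exact hP.2 a a' b y hb hb'

theorem usedSymbols_addTransversal [NeZero M] (hempty : ∀ a, P (a, g a) = none)
    (hx : x ∉ usedSymbols P) : usedSymbols (addTransversal P g x) = insert x (usedSymbols P) := by
  ext y
  refine ⟨fun hy => ?_, fun hy => ?_⟩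
  · obtain ⟨c, hc⟩ := mem_usedSymbols.mp hy
    rcases addTransversal_eq_some hx hc with ⟨-, rfl⟩ | ⟨-, hc⟩
    · exact mem_insert_self _ _
    · exact mem_insert_of_mem (mem_usedSymbols.mpr ⟨c, hc⟩)
  · rcases mem_insert.mp hy with rfl | hy
    · exact mem_usedSymbols.mpr ⟨(0, g 0), by simp [addTransversal]⟩
    · obtain ⟨c, hc⟩ := mem_usedSymbols.mp hy
      exact mem_usedSymbols.mpr ⟨c, addTransversal_eq_some_of_eq_some hempty hc⟩

theorem usedSymbolsMeetEveryLine_addTransversal (hfull : UsedSymbolsMeetEveryLine P)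
    (hg : Injective g) (hempty : ∀ a, P (a, g a) = none) (hx : x ∉ usedSymbols P) :
    UsedSymbolsMeetEveryLine (addTransversal P g x) := by
  intro y hy
  obtain ⟨c, hc⟩ := mem_usedSymbols.mp hy
  rcases addTransversal_eq_some hx hc with ⟨-, rfl⟩ | ⟨-, hc⟩
  · refine ⟨fun a => ⟨g a, by simp [addTransversal]⟩, fun b => ?_⟩
    obtain ⟨a, rfl⟩ := (Finite.injective_iff_surjective.mp hg) b
    exact ⟨a, by simp [addTransversal]⟩
  · obtain ⟨hrow, hcol⟩ := hfull y (mem_usedSymbols.mpr ⟨c, hc⟩)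
    refine ⟨fun a => ?_, fun b => ?_⟩
    · obtain ⟨b, hb⟩ := hrow a
      exact ⟨b, addTransversal_eq_some_of_eq_some hempty hb⟩
    · obtain ⟨a, ha⟩ := hcol b
      exact ⟨a, addTransversal_eq_some_of_eq_some hempty ha⟩

end addTransversal

theorem IsPartialLatinSquare.exists_completion {P : Fin M × Fin M → Option (Fin M)}
    (hP : IsPartialLatinSquare P) (hfull : UsedSymbolsMeetEveryLine P) :
    ∃ f : Fin M × Fin M → Fin M, IsLatinSquare f ∧ Completes f P := by
  have hle : #(usedSymbols P) ≤ M := by simpa using card_le_univ (usedSymbols P)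
  by_cases hk : #(usedSymbols P) = M
  · refine hP.exists_completion_of_forall_ne_none fun c hc => ?_
    have hrow := hP.card_row_eq_none hfull c.1
    rw [hk, Nat.sub_self, card_eq_zero, filter_eq_empty_iff] at hrow
    exact hrow (mem_univ c.2) hc
  have hlt : #(usedSymbols P) < M := lt_of_le_of_ne hle hk
  obtain ⟨x, -, hx⟩ := exists_mem_notMem_of_card_lt_card (s := usedSymbols P) (t := univ)
    (by simpa using hlt)
  have : NeZero M := ⟨fun hM => (hM ▸ x).elim0⟩
  obtain ⟨g, hg, hempty⟩ := exists_injective_of_forall_le_card_of_forall_card_le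
    (fun a b => P (a, b) = none) (Nat.sub_pos_of_lt hlt)
    (fun a => (hP.card_row_eq_none hfull a).ge) (fun b => (hP.card_col_eq_none hfull b).le)
  obtain ⟨f, hf, hcompl⟩ := (isPartialLatinSquare_addTransversal hP hg hx).exists_completion
    (usedSymbolsMeetEveryLine_addTransversal hfull hg hempty hx)
  exact ⟨f, hf, fun c y hc => hcompl c y (addTransversal_eq_some_of_eq_some hempty hc)⟩
termination_by M - #(usedSymbols P)
decreasing_by
  rw [usedSymbols_addTransversal hempty hx, card_insert_of_notMem hx]
  omega

theorem partialLatinSquare_completable_general (M : ℕ)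
    (P : Fin M × Fin M → Option (Fin M)) (hP : IsPartialLatinSquare P)
    (happ : ∀ x : Fin M, (∃ c, P c = some x) →
      (Finset.univ.filter fun c : Fin M × Fin M => P c = some x).card = M) :
    ∃ f : Fin M × Fin M → Fin M, IsLatinSquare f ∧
      ∀ (c : Fin M × Fin M) (x : Fin M), P c = some x → f c = x :=
  hP.exists_completion (hP.usedSymbolsMeetEveryLine_of_card_eq happ)

/-- a partial Latin square of order `M` using fewer than `M`
symbols, in which every appearing symbol appears in exactly `M` cells, can be
completed to a Latin square of order `M` with symbols in `Fin M`. -/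
theorem partialLatinSquare_completable (M : ℕ) (hM : 2 ≤ M)
    (P : Fin M × Fin M → Option (Fin M)) (hP : IsPartialLatinSquare P)
    (hcard : (Finset.univ.filter fun x : Fin M => ∃ c, P c = some x).card < M)
    (happ : ∀ x : Fin M, (∃ c, P c = some x) →
      (Finset.univ.filter fun c : Fin M × Fin M => P c = some x).card = M) :
    ∃ f : Fin M × Fin M → Fin M, IsLatinSquare f ∧
      ∀ (c : Fin M × Fin M) (x : Fin M), P c = some x → f c = x :=
  partialLatinSquare_completable_general M P hP happ
end
end

section
/- Let S : Fin 4 → ℂ be the 4-QAM signal set given by S(0) = −1−i, S(1) = −1+i, S(2) = 1−i, S(3) = 1+i, and let s = (1+i)/2. Then the chromatic number of the singularity removal graph G_s equals 5. -/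
noncomputable section

/-- The 4-QAM signal set. -/
def qam4 : Fin 4 → ℂ := ![-1 - Complex.I, -1 + Complex.I, 1 - Complex.I, 1 + Complex.I]

/-! With `s = (1 + i)/2` the doubled point `2 (S a + s S b) = 2 S a + (1 + i) S b` of a constellation
with integer coordinates is a Gaussian integer, so the singularity removal constraints of 4-QAM
are the fibres of an explicit integer-valued key and everything about `G_s` becomes decidable.
There are twelve constraints, four of which contain two cells. A 4 × 4 Latin square on five
symbols that is constant on these constraints is a proper 5-colouring of `G_s`, and the
constraints of `(0,0)`, `(0,2) ~ (2,1)`, `(0,3) ~ (1,0)`, `(2,0)` and `(2,3) ~ (3,0)` are pairwise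
adjacent, so `G_s` contains a 5-clique. -/

open Complex

section FadeKey

variable {M : ℕ} {S : Fin M → ℂ} {s : ℂ}

theorem IsLatinSquare.eq_of_apply_eq {t : ℕ} {f : Fin M × Fin M → Fin t} (hf : IsLatinSquare f)
    {p q : Fin M × Fin M} (hpq : p.1 = q.1 ∨ p.2 = q.2) (h : f p = f q) : p = q := by
  obtain ⟨a, b⟩ := p
  obtain ⟨a', b'⟩ := q
  rcases hpq with rfl | rfl
  · rw [hf.1 a h]
  · rw [hf.2 b h]

theorem srg_colorable_of_isLatinSquare {t : ℕ} {f : Fin M × Fin M → Fin t}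
    (hL : IsLatinSquare f) (hR : RemovesFadeState M S s f) : (srg M S s).Colorable t := by
  refine ⟨⟨Quotient.lift f hR, ?_⟩⟩
  rintro _ _ ⟨hne, p, q, rfl, rfl, hpq⟩ hfpq
  exact hne (congrArg _ (hL.eq_of_apply_eq hpq hfpq))

theorem removesFadeState_iff_of_key {K : Type*} {κ : Fin M × Fin M → K}
    (hκ : ∀ p q, S p.1 + s * S p.2 = S q.1 + s * S q.2 ↔ κ p = κ q)
    {t : ℕ} {f : Fin M × Fin M → Fin t} :
    RemovesFadeState M S s f ↔ ∀ p q, κ p = κ q → f p = f q := by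
  simp only [RemovesFadeState, hκ]

theorem srg_adj_mk_iff_of_key {K : Type*} {κ : Fin M × Fin M → K}
    (hκ : ∀ p q, S p.1 + s * S p.2 = S q.1 + s * S q.2 ↔ κ p = κ q) {p q : Fin M × Fin M} :
    (srg M S s).Adj (Quotient.mk _ p) (Quotient.mk _ q) ↔
      κ p ≠ κ q ∧ ∃ p' q', κ p' = κ p ∧ κ q' = κ q ∧ (p'.1 = q'.1 ∨ p'.2 = q'.2) := by
  have hmk : ∀ p q, Quotient.mk (fadeSetoid M S s) p = Quotient.mk _ q ↔ κ p = κ q :=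
    fun p q => Quotient.eq.trans (hκ p q)
  simp only [srg, ne_eq, hmk]

end FadeKey

/-- The coordinates of `2 (S a + (1 + i)/2 * S b)` when `S = x + y i`. -/
def twiceFadeCoords {M : ℕ} (x y : Fin M → ℤ) (p : Fin M × Fin M) : ℤ × ℤ :=
  (2 * x p.1 + x p.2 - y p.2, 2 * y p.1 + x p.2 + y p.2)

theorem fade_eq_iff_twiceFadeCoords_eq {M : ℕ} {S : Fin M → ℂ} (x y : Fin M → ℤ)
    (hS : ∀ a, S a = x a + y a * I) (p q : Fin M × Fin M) :
    S p.1 + (1 + I) / 2 * S p.2 = S q.1 + (1 + I) / 2 * S q.2 ↔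
      twiceFadeCoords x y p = twiceFadeCoords x y q := by
  have hdouble : ∀ p : Fin M × Fin M, 2 * (S p.1 + (1 + I) / 2 * S p.2) =
      ((twiceFadeCoords x y p).1 : ℂ) + (twiceFadeCoords x y p).2 * I := by
    intro p
    simp only [twiceFadeCoords, hS]
    push_cast
    linear_combination (y p.2 : ℂ) * I_sq
  rw [← mul_right_inj' (two_ne_zero (α := ℂ)), hdouble, hdouble, Complex.ext_iff, Prod.ext_iff]
  simp

def qam4Re : Fin 4 → ℤ := ![-1, -1, 1, 1]

def qam4Im : Fin 4 → ℤ := ![-1, 1, -1, 1]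

theorem qam4_eq (a : Fin 4) : qam4 a = qam4Re a + qam4Im a * I := by
  fin_cases a <;> simp [qam4, qam4Re, qam4Im, sub_eq_add_neg]

def qam4Latin : Fin 4 × Fin 4 → Fin 5 := fun p =>
  ![![0, 1, 2, 3],
    ![3, 0, 4, 2],
    ![4, 2, 0, 1],
    ![1, 4, 3, 0]] p.1 p.2

theorem isLatinSquare_qam4Latin : IsLatinSquare qam4Latin := by
  unfold IsLatinSquare Function.Injective
  decide

def qam4Clique : Fin 5 → Fin 4 × Fin 4 := ![(0, 0), (0, 2), (0, 3), (2, 0), (2, 3)]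

/-- for 4-QAM and the singular fade state `s = (1+i)/2`, the
chromatic number of the singularity removal graph equals 5. -/
theorem qam4_chromaticNumber_eq_five :
    (srg 4 qam4 ((1 + Complex.I) / 2)).chromaticNumber = ((5 : ℕ) : ℕ∞) := by
  have hκ := fade_eq_iff_twiceFadeCoords_eq qam4Re qam4Im qam4_eq
  apply le_antisymm
  · refine (srg_colorable_of_isLatinSquare isLatinSquare_qam4Latin ?_).chromaticNumber_le
    rw [removesFadeState_iff_of_key hκ]
    decide
  · refine SimpleGraph.le_chromaticNumber_of_pairwise_adj (by simp)
      (fun i => Quotient.mk _ (qam4Clique i)) ?_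
    intro i j hij
    rw [srg_adj_mk_iff_of_key hκ]
    revert i j
    decide
end
end
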